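/- arXiv:1308.6526 — 8 statements merged into one kernel-verified Lean document; each statement's English description precedes it below -/
import Mathlib

section
/- Deterministic delivery (Lemma on reliability 1): Let p be a probability profile. If there exist a node i ∈ N and a path x_0 = s, x_1, …, x_n = i such that p_{x_r}[x_{r+1}] = 1 for every r ∈ {0, …, n−1}, then q_i[p] = 0, i.e., φ[∅,{s}|p,{i}] = 0. -/
/-!
If the walk `y` reaches a node of `I` at time `k` and then follows edges of probability one
until it hits the target set, every summand in the recursion for `φ[R, I]` vanishes: either
`y (k + 1)` is not infected in the next step, and then the factor `1 - p (y k) (y (k + 1)) = 0`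
kills `Q`, or it is, and then the last index `k'` of the walk among the newly infected nodes
gives the same situation one level deeper, with `k < k'`.
-/

/-- The probability `φ[R, I | p, L]` that no node of `L` ever gets infected, in the
epidemic dissemination process on the node set `N`, given that `R` is the set of nodes
infected before the last step, `I` the set of nodes infected in the last step, and
`p` the profile of forwarding probabilities. -/
noncomputable def phi {V : Type*} [Fintype V] [DecidableEq V]
    (N : Finset V) (p : V → V → ℝ) (L : Finset V) (R I : Finset V) : ℝ :=
  if hI : I = ∅ then 1
  else
    ∑ H ∈ (N \ (R ∪ I ∪ L)).powerset.attach,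
      (∏ k ∈ H.1, (1 - ∏ l ∈ I, (1 - p l k))) *
        (∏ k ∈ N \ (H.1 ∪ R ∪ I), ∏ l ∈ I, (1 - p l k)) *
        phi N p L (R ∪ I) H.1
termination_by (Finset.univ \ (R ∪ I)).card * 2 + I.card
decreasing_by
  have hHsub : H.1 ⊆ Finset.univ \ (R ∪ I) := by
    intro x hx
    have hx' := Finset.mem_powerset.mp H.2 hx
    rw [Finset.mem_sdiff] at hx' ⊢
    exact ⟨Finset.mem_univ x, fun hc => hx'.2 (Finset.mem_union_left _ hc)⟩
  have heq : Finset.univ \ (R ∪ I ∪ H.1) = (Finset.univ \ (R ∪ I)) \ H.1 := by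
    ext x
    simp only [Finset.mem_sdiff, Finset.mem_union, Finset.mem_univ, true_and]
    tauto
  have hcard : (Finset.univ \ (R ∪ I ∪ H.1)).card
      = (Finset.univ \ (R ∪ I)).card - H.1.card := by
    rw [heq, Finset.card_sdiff, Finset.inter_eq_left.mpr hHsub]
  have hle : H.1.card ≤ (Finset.univ \ (R ∪ I)).card := Finset.card_le_card hHsub
  have hpos : 0 < I.card := Finset.card_pos.mpr (Finset.nonempty_iff_ne_empty.mpr hI)
  omega

open Finset

lemma Nat.exists_last_of_not {P : ℕ → Prop} {a m : ℕ} (ha : P a) (hm : ¬P m) (ham : a ≤ m) :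
    ∃ k, a ≤ k ∧ k < m ∧ P k ∧ ∀ j, k < j → j ≤ m → ¬P j := by
  classical
  have hk : P (Nat.findGreatest P m) := Nat.findGreatest_spec ham ha
  refine ⟨Nat.findGreatest P m, Nat.le_findGreatest ham ha, ?_, hk,
    fun j hj hjm => Nat.findGreatest_is_greatest hj hjm⟩
  exact lt_of_le_of_ne (Nat.findGreatest_le m) fun h => hm (h ▸ hk)

theorem phi_eq_zero_of_sure_path {V : Type*} [Fintype V] [DecidableEq V]
    {N L R I : Finset V} {p : V → V → ℝ} {y : ℕ → V} {k m : ℕ}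
    (hkm : k < m) (hyk : y k ∈ I) (hym : y m ∈ L)
    (hyN : ∀ j, k < j → j ≤ m → y j ∈ N)
    (hyRI : ∀ j, k < j → j ≤ m → y j ∉ R ∪ I)
    (hone : ∀ j, k ≤ j → j < m → p (y j) (y (j + 1)) = 1) :
    phi N p L R I = 0 := by
  rw [phi, dif_neg (ne_empty_of_mem hyk)]
  refine sum_eq_zero fun H _ => ?_
  have hH : H.1 ⊆ N \ (R ∪ I ∪ L) := mem_powerset.mp H.2
  by_cases hnext : y (k + 1) ∈ H.1
  · have hymH : y m ∉ H.1 := fun h => (mem_sdiff.mp (hH h)).2 (mem_union_right _ hym)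
    obtain ⟨k', hkk', hk'm, hyk', hlast⟩ :=
      Nat.exists_last_of_not (P := (y · ∈ H.1)) hnext hymH hkm
    have hrec : phi N p L (R ∪ I) H.1 = 0 :=
      phi_eq_zero_of_sure_path hk'm hyk' hym (fun j hj => hyN j (by omega))
        (fun j hj hjm => by
          rw [mem_union, not_or]
          exact ⟨hyRI j (by omega) hjm, hlast j hj hjm⟩)
        (fun j hj => hone j (by omega))
    rw [hrec, mul_zero]
  · have hQ : y (k + 1) ∈ N \ (H.1 ∪ R ∪ I) := by
      have := hyRI (k + 1) (by omega) hkm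
      simp only [mem_union, not_or] at this
      simp [hyN (k + 1) (by omega) hkm, hnext, this]
    rw [prod_eq_zero hQ (prod_eq_zero hyk (by rw [hone k le_rfl hkm, sub_self])),
      mul_zero, zero_mul]
termination_by m - k

theorem deterministic_delivery_general
    {V : Type*} [Fintype V] [DecidableEq V]
    (N : Finset V) (s : V) (hs : s ∉ N)
    (p : V → V → ℝ)
    (i : V)
    (n : ℕ) (x : ℕ → V)
    (hn : 1 ≤ n) (hx0 : x 0 = s) (hxn : x n = i)
    (hxN : ∀ r, 1 ≤ r → r ≤ n → x r ∈ N)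
    (hone : ∀ r < n, p (x r) (x (r + 1)) = 1) :
    phi N p {i} ∅ {s} = 0 :=
  phi_eq_zero_of_sure_path hn (by simp [hx0]) (by simp [hxn]) hxN
    (fun j hj hjn hsj => by
      rw [empty_union, mem_singleton] at hsj
      exact hs (hsj ▸ hxN j hj hjn))
    (fun j _ hjn => hone j hjn)

/-- **Deterministic delivery.**  If there is a path from the source `s` to node `i`
along which every forwarding probability equals `1`, then the non-delivery
probability of `i` is `0`, i.e. `φ[∅, {s} | p, {i}] = 0`. -/
theorem deterministic_delivery
    {V : Type*} [Fintype V] [DecidableEq V]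
    (N : Finset V) (s : V) (hs : s ∉ N)
    (p : V → V → ℝ)
    (hp : ∀ l ∈ insert s N, ∀ k ∈ N, 0 ≤ p l k ∧ p l k ≤ 1)
    (i : V) (hi : i ∈ N)
    (n : ℕ) (x : ℕ → V)
    (hn : 1 ≤ n) (hx0 : x 0 = s) (hxn : x n = i)
    (hxN : ∀ r, 1 ≤ r → r ≤ n → x r ∈ N)
    (hone : ∀ r < n, p (x r) (x (r + 1)) = 1) :
    phi N p {i} ∅ {s} = 0 :=
  deterministic_delivery_general N s hs p i n x hn hx0 hxn hxN hone
end

section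
/- Positive reliability: Let p be a probability profile. If there exist a node i ∈ N and a path x_0 = s, x_1, …, x_n = i such that p_{x_r}[x_{r+1}] > 0 for every r ∈ {0, …, n−1}, then q_i[p] < 1, i.e., φ[∅,{s}|p,{i}] < 1. -/
open Finset

lemma prod_one_sub_mem_Icc {ι : Type*} {s : Finset ι} {f : ι → ℝ}
    (hf : ∀ i ∈ s, f i ∈ Set.Icc 0 1) : ∏ i ∈ s, (1 - f i) ∈ Set.Icc 0 1 :=
  ⟨prod_nonneg fun i hi => sub_nonneg.2 (hf i hi).2,
    prod_le_one (fun i hi => sub_nonneg.2 (hf i hi).2) fun i hi => sub_le_self _ (hf i hi).1⟩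

lemma prod_one_sub_lt_one {ι : Type*} {s : Finset ι} {f : ι → ℝ}
    (hf : ∀ i ∈ s, f i ∈ Set.Icc 0 1) {j : ι} (hj : j ∈ s) (hfj : 0 < f j) :
    ∏ i ∈ s, (1 - f i) < 1 :=
  calc ∏ i ∈ s, (1 - f i)
      ≤ ∏ i ∈ {j}, (1 - f i) :=
        prod_le_prod_of_subset_of_le_one (singleton_subset_iff.2 hj)
          (fun i hi => sub_nonneg.2 (hf i hi).2) fun i hi _ => sub_le_self _ (hf i hi).1
    _ = 1 - f j := prod_singleton _ _
    _ < 1 := sub_lt_self _ hfj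

lemma sum_powerset_prod_one_sub_mul_prod_sdiff {ι : Type*} [DecidableEq ι] (s : Finset ι)
    (a : ι → ℝ) : ∑ t ∈ s.powerset, (∏ i ∈ t, (1 - a i)) * ∏ i ∈ s \ t, a i = 1 := by
  simpa using (prod_add (fun i => 1 - a i) a s).symm

lemma Nat.exists_last_of_le {P : ℕ → Prop} [DecidablePred P] {a m : ℕ} (ham : a ≤ m)
    (ha : P a) : ∃ J, a ≤ J ∧ J ≤ m ∧ P J ∧ ∀ j, J < j → j ≤ m → ¬P j :=
  ⟨Nat.findGreatest P m, Nat.le_findGreatest ham ha, Nat.findGreatest_le m,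
    Nat.findGreatest_spec ham ha, fun _ hj hjm => Nat.findGreatest_is_greatest hj hjm⟩

def missProb {V : Type*} (p : V → V → ℝ) (I : Finset V) (k : V) : ℝ := ∏ l ∈ I, (1 - p l k)

/-- `P[I,H|p] · Q[N,R,I,H|p]`: the probability that the nodes infected in the next step are
exactly those of `H`. -/
def transitionProb {V : Type*} [DecidableEq V] (N : Finset V) (p : V → V → ℝ) (R I H : Finset V) :
    ℝ :=
  (∏ k ∈ H, (1 - missProb p I k)) * ∏ k ∈ N \ (H ∪ R ∪ I), missProb p I k

section Dissemination

variable {V : Type*} {N : Finset V} {p : V → V → ℝ}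

lemma missProb_mem_Icc {I : Finset V} {k : V} (hp : ∀ l ∈ I, p l k ∈ Set.Icc 0 1) :
    missProb p I k ∈ Set.Icc 0 1 :=
  prod_one_sub_mem_Icc hp

lemma missProb_lt_one {I : Finset V} {k l : V} (hp : ∀ l ∈ I, p l k ∈ Set.Icc 0 1)
    (hl : l ∈ I) (hlk : 0 < p l k) : missProb p I k < 1 :=
  prod_one_sub_lt_one hp hl hlk

variable [DecidableEq V]

lemma transitionProb_nonneg {R I H : Finset V} (hp : ∀ l ∈ I, ∀ k ∈ N, p l k ∈ Set.Icc 0 1)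
    (hH : H ⊆ N) : 0 ≤ transitionProb N p R I H :=
  mul_nonneg
    (prod_nonneg fun k hk => sub_nonneg.2 (missProb_mem_Icc fun l hl => hp l hl k (hH hk)).2)
    (prod_nonneg fun k hk => (missProb_mem_Icc fun l hl => hp l hl k (mem_sdiff.1 hk).1).1)

lemma transitionProb_pos {R I H : Finset V} (hH : ∀ k ∈ H, missProb p I k < 1)
    (hQ : ∀ k ∈ N \ (H ∪ R ∪ I), 0 < missProb p I k) : 0 < transitionProb N p R I H :=
  mul_pos (prod_pos fun k hk => sub_pos.2 (hH k hk)) (prod_pos hQ)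

lemma transitionProb_filter_missProb_lt_one_pos {L R I : Finset V}
    (hL : ∀ k ∈ L, 0 < missProb p I k) :
    0 < transitionProb N p R I ((N \ (R ∪ I ∪ L)).filter (missProb p I · < 1)) := by
  refine transitionProb_pos (fun k hk => (mem_filter.1 hk).2) fun k hk => ?_
  by_cases hkL : k ∈ L
  · exact hL k hkL
  refine one_pos.trans_le (not_lt.1 fun hlt => (mem_sdiff.1 hk).2 ?_)
  simp_all

lemma sum_transitionProb (L R I : Finset V) :
    ∑ H ∈ (N \ (R ∪ I ∪ L)).powerset, transitionProb N p R I H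
      = ∏ k ∈ (N ∩ L) \ (R ∪ I), missProb p I k := by
  have hsplit : ∀ H ∈ (N \ (R ∪ I ∪ L)).powerset, transitionProb N p R I H
      = (∏ k ∈ H, (1 - missProb p I k)) * (∏ k ∈ (N \ (R ∪ I ∪ L)) \ H, missProb p I k) *
          ∏ k ∈ (N ∩ L) \ (R ∪ I), missProb p I k := by
    intro H hH
    have hH := mem_powerset.1 hH
    have hunion : N \ (H ∪ R ∪ I) = ((N \ (R ∪ I ∪ L)) \ H) ∪ (N ∩ L) \ (R ∪ I) := by
      ext k
      have := @hH k
      simp only [mem_sdiff, mem_union, mem_inter] at this ⊢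
      tauto
    have hdisj : Disjoint ((N \ (R ∪ I ∪ L)) \ H) ((N ∩ L) \ (R ∪ I)) := by
      rw [disjoint_left]
      intro k
      simp only [mem_sdiff, mem_union, mem_inter]
      tauto
    rw [transitionProb, hunion, prod_union hdisj, mul_assoc]
  rw [sum_congr rfl hsplit, ← sum_mul, sum_powerset_prod_one_sub_mul_prod_sdiff, one_mul]

variable [Fintype V]

lemma phi_empty (L R : Finset V) : phi N p L R ∅ = 1 := by
  rw [phi.eq_1, dif_pos rfl]

lemma phi_eq_sum {L R I : Finset V} (hI : I ≠ ∅) :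
    phi N p L R I = ∑ H ∈ (N \ (R ∪ I ∪ L)).powerset,
      transitionProb N p R I H * phi N p L (R ∪ I) H := by
  rw [phi.eq_1, dif_neg hI]
  exact sum_attach _ fun H => transitionProb N p R I H * phi N p L (R ∪ I) H

lemma phi_mem_Icc {L R I : Finset V} (hpN : ∀ l ∈ N, ∀ k ∈ N, p l k ∈ Set.Icc 0 1)
    (hpI : ∀ l ∈ I, ∀ k ∈ N, p l k ∈ Set.Icc 0 1) : phi N p L R I ∈ Set.Icc 0 1 := by
  induction R, I using phi.induct N L with
  | case1 R => simp [phi_empty]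
  | case2 R I hI ih =>
    have hw : ∀ H ∈ (N \ (R ∪ I ∪ L)).powerset, 0 ≤ transitionProb N p R I H :=
      fun H hH => transitionProb_nonneg hpI ((mem_powerset.1 hH).trans sdiff_subset)
    have hrec : ∀ H ∈ (N \ (R ∪ I ∪ L)).powerset, phi N p L (R ∪ I) H ∈ Set.Icc 0 1 :=
      fun H hH => ih ⟨H, hH⟩ fun l hl => hpN l ((mem_sdiff.1 (mem_powerset.1 hH hl)).1)
    have hmiss : ∀ k ∈ (N ∩ L) \ (R ∪ I), missProb p I k ∈ Set.Icc 0 1 := fun k hk =>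
      missProb_mem_Icc fun l hl => hpI l hl k (mem_inter.1 (mem_sdiff.1 hk).1).1
    rw [phi_eq_sum hI]
    refine ⟨sum_nonneg fun H hH => mul_nonneg (hw H hH) (hrec H hH).1, ?_⟩
    calc ∑ H ∈ (N \ (R ∪ I ∪ L)).powerset, transitionProb N p R I H * phi N p L (R ∪ I) H
        ≤ ∑ H ∈ (N \ (R ∪ I ∪ L)).powerset, transitionProb N p R I H :=
          sum_le_sum fun H hH => mul_le_of_le_one_right (hw H hH) (hrec H hH).2
      _ = ∏ k ∈ (N ∩ L) \ (R ∪ I), missProb p I k := sum_transitionProb L R I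
      _ ≤ 1 := prod_le_one (fun k hk => (hmiss k hk).1) fun k hk => (hmiss k hk).2

lemma phi_le_sub_transitionProb_mul {L R I H₀ : Finset V}
    (hpN : ∀ l ∈ N, ∀ k ∈ N, p l k ∈ Set.Icc 0 1) (hpI : ∀ l ∈ I, ∀ k ∈ N, p l k ∈ Set.Icc 0 1)
    (hI : I ≠ ∅) (hH₀ : H₀ ⊆ N \ (R ∪ I ∪ L)) :
    phi N p L R I ≤ ∏ k ∈ (N ∩ L) \ (R ∪ I), missProb p I k
      - transitionProb N p R I H₀ * (1 - phi N p L (R ∪ I) H₀) := by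
  have hgap : ∀ H ∈ (N \ (R ∪ I ∪ L)).powerset,
      0 ≤ transitionProb N p R I H * (1 - phi N p L (R ∪ I) H) := by
    intro H hH
    have hHN : H ⊆ N := (mem_powerset.1 hH).trans sdiff_subset
    exact mul_nonneg (transitionProb_nonneg hpI hHN)
      (sub_nonneg.2 (phi_mem_Icc hpN fun l hl => hpN l (hHN hl)).2)
  calc phi N p L R I
      = ∑ H ∈ (N \ (R ∪ I ∪ L)).powerset, transitionProb N p R I H
        - ∑ H ∈ (N \ (R ∪ I ∪ L)).powerset,
            transitionProb N p R I H * (1 - phi N p L (R ∪ I) H) := by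
        rw [phi_eq_sum hI, ← sum_sub_distrib]
        exact sum_congr rfl fun H _ => by ring
    _ ≤ ∑ H ∈ (N \ (R ∪ I ∪ L)).powerset, transitionProb N p R I H
        - transitionProb N p R I H₀ * (1 - phi N p L (R ∪ I) H₀) :=
        sub_le_sub_left (single_le_sum hgap (mem_powerset.2 hH₀)) _
    _ = _ := by rw [sum_transitionProb]

lemma phi_singleton_le_sub_transitionProb_mul {i : V} {R I H₀ : Finset V}
    (hpN : ∀ l ∈ N, ∀ k ∈ N, p l k ∈ Set.Icc 0 1) (hpI : ∀ l ∈ I, ∀ k ∈ N, p l k ∈ Set.Icc 0 1)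
    (hI : I ≠ ∅) (hi : i ∈ N \ (R ∪ I)) (hH₀ : H₀ ⊆ N \ (R ∪ I ∪ {i})) :
    phi N p {i} R I
      ≤ missProb p I i - transitionProb N p R I H₀ * (1 - phi N p {i} (R ∪ I) H₀) := by
  have htarget : (N ∩ {i}) \ (R ∪ I) = {i} := by
    rw [inter_singleton_of_mem (mem_sdiff.1 hi).1,
      sdiff_eq_self_of_disjoint (disjoint_singleton_left.2 (mem_sdiff.1 hi).2)]
  simpa [htarget] using phi_le_sub_transitionProb_mul hpN hpI hI hH₀

theorem phi_lt_one_of_path (hpN : ∀ l ∈ N, ∀ k ∈ N, p l k ∈ Set.Icc 0 1) {i : V}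
    {R I : Finset V} (hpI : ∀ l ∈ I, ∀ k ∈ N, p l k ∈ Set.Icc 0 1) {m : ℕ} {y : ℕ → V}
    (hm : 1 ≤ m) (hy₀ : y 0 ∈ I) (hy : ∀ j, 1 ≤ j → j ≤ m → y j ∈ N \ (R ∪ I))
    (hym : y m = i) (hpos : ∀ j < m, 0 < p (y j) (y (j + 1))) :
    phi N p {i} R I < 1 := by
  induction R, I using phi.induct N {i} generalizing m y with
  | case1 R => simp at hy₀
  | case2 R I hI ih =>
    have hi : i ∈ N \ (R ∪ I) := hym ▸ hy m hm le_rfl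
    have hle : ∀ H₀ ⊆ N \ (R ∪ I ∪ {i}), phi N p {i} R I
        ≤ missProb p I i - transitionProb N p R I H₀ * (1 - phi N p {i} (R ∪ I) H₀) :=
      fun H₀ => phi_singleton_le_sub_transitionProb_mul hpN hpI hI hi
    rcases (missProb_mem_Icc fun l hl => hpI l hl i (mem_sdiff.1 hi).1).2.lt_or_eq
      with hlt | hmiss_i
    · calc phi N p {i} R I
          ≤ missProb p I i - transitionProb N p R I ∅ * (1 - phi N p {i} (R ∪ I) ∅) :=
            hle ∅ (empty_subset _)
        _ < 1 := by rwa [phi_empty, sub_self, mul_zero, sub_zero]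
    set H₀ := (N \ (R ∪ I ∪ {i})).filter (missProb p I · < 1)
    have hH₀ : H₀ ⊆ N \ (R ∪ I ∪ {i}) := filter_subset _ _
    have hiH₀ : i ∉ H₀ := fun h => by simpa using (mem_sdiff.1 (hH₀ h)).2
    have hy₁ : y 1 ∈ H₀ := by
      have hy₁N := mem_sdiff.1 (hy 1 le_rfl hm)
      have hlt : missProb p I (y 1) < 1 :=
        missProb_lt_one (fun l hl => hpI l hl (y 1) hy₁N.1) hy₀ (hpos 0 hm)
      have hne : y 1 ≠ i := fun h => (h ▸ hlt).ne hmiss_i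
      simp [H₀, hy₁N, hne, hlt]
    obtain ⟨J, hJ₁, hJm, hyJ, hlast⟩ := Nat.exists_last_of_le (P := (y · ∈ H₀)) hm hy₁
    have hJm : J < m := hJm.lt_of_ne (by rintro rfl; exact hiH₀ (hym ▸ hyJ))
    have hrec : phi N p {i} (R ∪ I) H₀ < 1 := by
      refine ih ⟨H₀, mem_powerset.2 hH₀⟩ (fun l hl => hpN l (mem_sdiff.1 (hH₀ hl)).1)
        (m := m - J) (y := fun j => y (J + j)) (by omega) hyJ (fun j hj₁ hjm => ?_)
        (by simpa [Nat.add_sub_cancel' hJm.le] using hym) fun j hj => ?_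
      · have hyN := mem_sdiff.1 (hy (J + j) (by omega) (by omega))
        have hyH₀ := hlast (J + j) (by omega) (by omega)
        simp only [mem_sdiff, mem_union] at hyN ⊢
        tauto
      · simpa [add_assoc] using hpos (J + j) (by omega)
    have hw : 0 < transitionProb N p R I H₀ :=
      transitionProb_filter_missProb_lt_one_pos fun k hk => by
        rw [mem_singleton.1 hk, hmiss_i]
        exact one_pos
    calc phi N p {i} R I
        ≤ missProb p I i - transitionProb N p R I H₀ * (1 - phi N p {i} (R ∪ I) H₀) :=
          hle H₀ hH₀
      _ < 1 := by rw [hmiss_i]; exact sub_lt_self _ (mul_pos hw (sub_pos.2 hrec))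

end Dissemination

theorem positive_reliability_general
    {V : Type*} [Fintype V] [DecidableEq V]
    (N : Finset V) (s : V) (hs : s ∉ N)
    (p : V → V → ℝ)
    (hp : ∀ l ∈ insert s N, ∀ k ∈ N, 0 ≤ p l k ∧ p l k ≤ 1)
    (i : V)
    (n : ℕ) (x : ℕ → V)
    (hn : 1 ≤ n) (hx0 : x 0 = s) (hxn : x n = i)
    (hxN : ∀ r, 1 ≤ r → r ≤ n → x r ∈ N)
    (hpos : ∀ r < n, 0 < p (x r) (x (r + 1))) :
    phi N p {i} ∅ {s} < 1 := by
  have hpath : ∀ r, 1 ≤ r → r ≤ n → x r ∈ N \ (∅ ∪ {s}) := fun r hr₁ hrn => by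
    have hxr := hxN r hr₁ hrn
    simpa [hxr] using ne_of_mem_of_not_mem hxr hs
  exact phi_lt_one_of_path (fun l hl => hp l (mem_insert_of_mem hl))
    (fun l hl => mem_singleton.1 hl ▸ hp s (mem_insert_self s N)) hn
    (hx0 ▸ mem_singleton_self s) hpath hxn hpos

/-- **Positive reliability.**  If there is a path from the source `s` to node `i`
along which every forwarding probability is positive, then the non-delivery
probability of `i` is strictly smaller than `1`, i.e. `φ[∅, {s} | p, {i}] < 1`. -/
theorem positive_reliability
    {V : Type*} [Fintype V] [DecidableEq V]
    (N : Finset V) (s : V) (hs : s ∉ N)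
    (p : V → V → ℝ)
    (hp : ∀ l ∈ insert s N, ∀ k ∈ N, 0 ≤ p l k ∧ p l k ≤ 1)
    (i : V) (hi : i ∈ N)
    (n : ℕ) (x : ℕ → V)
    (hn : 1 ≤ n) (hx0 : x 0 = s) (hxn : x n = i)
    (hxN : ∀ r, 1 ≤ r → r ≤ n → x r ∈ N)
    (hpos : ∀ r < n, 0 < p (x r) (x (r + 1))) :
    phi N p {i} ∅ {s} < 1 :=
  positive_reliability_general N s hs p hp i n x hn hx0 hxn hxN hpos
end

section
/- Null reliability: Let p be a probability profile and i ∈ N a node such that p_j[i] = 0 for every j ∈ N ∪ {s}. Then q_i[p] = 1, i.e., φ[∅,{s}|p,{i}] = 1. -/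

/- The one-step weights of `phi` form a product distribution over the newly infected set `H`,
so they sum to `1`; since no node ever infects `i`, the factor contributed by `i` itself is `1`
and each recursive call again has value `1`. -/

theorem Finset.sum_powerset_prod_mul_prod_sdiff_eq_one {ι R : Type*} [CommSemiring R]
    [DecidableEq ι] (s : Finset ι) (f g : ι → R) (h : ∀ i ∈ s, f i + g i = 1) :
    ∑ t ∈ s.powerset, (∏ i ∈ t, f i) * ∏ i ∈ s \ t, g i = 1 := by
  rw [← Finset.prod_add]
  exact Finset.prod_eq_one h

section Phi

variable {V : Type*} [DecidableEq V] (N : Finset V) (p : V → V → ℝ)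

theorem phi_of_ne_empty [Fintype V] (L R I : Finset V) (hI : I ≠ ∅) :
    phi N p L R I =
      ∑ H ∈ (N \ (R ∪ I ∪ L)).powerset,
        (∏ k ∈ H, (1 - ∏ l ∈ I, (1 - p l k))) *
          (∏ k ∈ N \ (H ∪ R ∪ I), ∏ l ∈ I, (1 - p l k)) * phi N p L (R ∪ I) H := by
  rw [phi, dif_neg hI]
  exact Finset.sum_attach _ fun H => (∏ k ∈ H, (1 - ∏ l ∈ I, (1 - p l k))) *
    (∏ k ∈ N \ (H ∪ R ∪ I), ∏ l ∈ I, (1 - p l k)) * phi N p L (R ∪ I) H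

theorem prod_compl_eq_prod_sdiff_of_target_unreachable {i : V} {R I H : Finset V}
    (hI : ∀ l ∈ I, p l i = 0) (hH : H ⊆ N \ (R ∪ I ∪ {i})) :
    ∏ k ∈ N \ (H ∪ R ∪ I), ∏ l ∈ I, (1 - p l k) =
      ∏ k ∈ (N \ (R ∪ I ∪ {i})) \ H, ∏ l ∈ I, (1 - p l k) := by
  refine (Finset.prod_subset (fun k hk => ?_) fun k hk hk' => ?_).symm
  · simp only [Finset.mem_sdiff, Finset.mem_union] at hk ⊢
    tauto
  · obtain rfl : k = i := by
      by_contra hki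
      simp only [Finset.mem_sdiff, Finset.mem_union, Finset.mem_singleton] at hk hk'
      tauto
    exact Finset.prod_eq_one fun l hl => by rw [hI l hl, sub_zero]

theorem phi_singleton_eq_one [Fintype V] {i : V} (hN : ∀ l ∈ N, p l i = 0) (R I : Finset V)
    (hI : ∀ l ∈ I, p l i = 0) : phi N p {i} R I = 1 := by
  induction R, I using phi.induct N {i} with
  | case1 R => rw [phi, dif_pos rfl]
  | case2 R I hIne ih =>
    have hchild : ∀ H ∈ (N \ (R ∪ I ∪ {i})).powerset, phi N p {i} (R ∪ I) H = 1 :=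
      fun H hH => ih ⟨H, hH⟩ fun l hl =>
        hN l (Finset.mem_sdiff.mp (Finset.mem_powerset.mp hH hl)).1
    rw [phi_of_ne_empty N p _ _ _ hIne]
    calc _ = ∑ H ∈ (N \ (R ∪ I ∪ {i})).powerset,
          (∏ k ∈ H, (1 - ∏ l ∈ I, (1 - p l k))) *
            ∏ k ∈ (N \ (R ∪ I ∪ {i})) \ H, ∏ l ∈ I, (1 - p l k) :=
          Finset.sum_congr rfl fun H hH => by
            rw [hchild H hH, mul_one,
              prod_compl_eq_prod_sdiff_of_target_unreachable N p hI (Finset.mem_powerset.mp hH)]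
      _ = 1 := Finset.sum_powerset_prod_mul_prod_sdiff_eq_one _ _ _ fun k _ => sub_add_cancel _ _

end Phi

theorem null_reliability_general
    {V : Type*} [Fintype V] [DecidableEq V]
    (N : Finset V) (s : V)
    (p : V → V → ℝ)
    (i : V)
    (hzero : ∀ j ∈ insert s N, p j i = 0) :
    phi N p {i} ∅ {s} = 1 :=
  phi_singleton_eq_one N p (fun l hl => hzero l (Finset.mem_insert_of_mem hl)) ∅ {s}
    fun l hl => hzero l (Finset.mem_singleton.mp hl ▸ Finset.mem_insert_self s N)

/-- **Null reliability.**  If no node (including the source `s`) ever forwards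
messages to `i`, i.e. `p_j[i] = 0` for every `j ∈ N ∪ {s}`, then the non-delivery
probability of `i` is `1`, i.e. `φ[∅, {s} | p, {i}] = 1`. -/
theorem null_reliability
    {V : Type*} [Fintype V] [DecidableEq V]
    (N : Finset V) (s : V) (hs : s ∉ N)
    (p : V → V → ℝ)
    (hp : ∀ l ∈ insert s N, ∀ k ∈ N, 0 ≤ p l k ∧ p l k ≤ 1)
    (i : V) (hi : i ∈ N)
    (hzero : ∀ j ∈ insert s N, p j i = 0) :
    phi N p {i} ∅ {s} = 1 :=
  null_reliability_general N s p i hzero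
end

section
/- Punishments expire after τ conformity stages (Corollary of corr-0): For every history h, every integer r ≥ τ, and all nodes i ∈ N and j ∈ N, if h_r denotes the history obtained from h by appending r copies of the all-cooperate signal, then DS_i[j|h_r] = ∅. -/
/-- The all-cooperate public signal: no pair is marked as a defection
(a signal value `true` means *defect*, `false` means *cooperate*). -/
def allCoop {ν : Type*} : ν → ν → Bool := fun _ _ => false

/-- The defection set `DS_i[j|h]` recording, for the pair of nodes `(i, j)`, the
defections they are both expected to react to, together with their age.  Histories are
lists of public signals, most recent signal first.  An element `(k₁, k₂, r)` means
that `i` and `j` both react to a defection of `k₁` from `k₂` that occurred in the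
previous `r`-th stage. -/
def DS {ν : Type*} (τ : ℤ) (RS : ν → ν → Set ν) (i j : ν) :
    List (ν → ν → Bool) → Set (ν × ν × ℤ)
  | [] => ∅
  | s :: h =>
      {x | (x.1, x.2.1, x.2.2 - 1) ∈ DS τ RS i j h ∧ x.2.2 < τ}
        ∪ {x | x.2.2 = 0 ∧ i ∈ RS x.1 x.2.1 ∧ j ∈ RS x.1 x.2.1 ∧ s x.1 x.2.1 = true}


/-!
A recorded defection ages by one stage per signal and is dropped once its age reaches `τ`,
and a cooperative signal records no new defection. So an entry present after `r ≥ 1`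
cooperative stages has age below `τ` (it survived the last stage) and at least `r` (it was
recorded before them, at age `≥ 0`), which is impossible once `r ≥ τ`.
-/

namespace DS

variable {ν : Type*} {τ : ℤ} {RS : ν → ν → Set ν} {i j : ν}

theorem age_nonneg {h : List (ν → ν → Bool)} {x : ν × ν × ℤ} (hx : x ∈ DS τ RS i j h) :
    0 ≤ x.2.2 := by
  induction h generalizing x with
  | nil => exact hx.elim
  | cons s h ih =>
    rcases hx with ⟨hmem, -⟩ | ⟨hzero, -⟩
    · linarith [ih hmem]
    · exact hzero.ge

theorem mem_cons_allCoop {h : List (ν → ν → Bool)} {x : ν × ν × ℤ} :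
    x ∈ DS τ RS i j (allCoop :: h) ↔ (x.1, x.2.1, x.2.2 - 1) ∈ DS τ RS i j h ∧ x.2.2 < τ := by
  simp [DS, allCoop]

theorem mem_of_mem_replicate_allCoop_append {h : List (ν → ν → Bool)} {x : ν × ν × ℤ} {n : ℕ}
    (hx : x ∈ DS τ RS i j (List.replicate n allCoop ++ h)) :
    (x.1, x.2.1, x.2.2 - n) ∈ DS τ RS i j h := by
  induction n generalizing x with
  | zero => simpa using hx
  | succ n ih =>
    rw [Nat.cast_succ, add_comm, ← sub_sub]
    exact ih (mem_cons_allCoop.mp hx).1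

end DS

/-- **Punishments expire after `τ` conformity stages (Corollary of corr-0).**
After appending `r ≥ τ` copies of the all-cooperate signal to any history `h`, the
defection set `DS_i[j|·]` is empty. -/
theorem DS_expires_after_conformity
    {ν : Type*} (τ : ℕ) (hτ : 1 ≤ τ) (RS : ν → ν → Set ν)
    (h : List (ν → ν → Bool)) (i j : ν)
    (r : ℕ) (hr : τ ≤ r) :
    DS (τ : ℤ) RS i j (List.replicate r allCoop ++ h) = ∅ := by
  refine Set.eq_empty_of_forall_notMem fun x hx => ?_
  obtain ⟨n, rfl⟩ : ∃ n, r = n + 1 := ⟨r - 1, by omega⟩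
  rw [List.replicate_succ, List.cons_append, DS.mem_cons_allCoop] at hx
  have hage : (0 : ℤ) ≤ x.2.2 - 1 - n :=
    DS.age_nonneg (DS.mem_of_mem_replicate_allCoop_append hx.1)
  omega
end

section
/- Expiry after a one-shot deviation (Lemma corr-2): Let s_0 be any public signal. For any history h and any integer r > τ, let h'_r be the history obtained from h by appending s_0 followed by r−1 copies of the all-cooperate signal, and let h*_r be the history obtained from h by appending r copies of the all-cooperate signal. Then for all nodes i, j ∈ N: DS_i[j|h'_r] = DS_i[j|h*_r] = ∅. -/
section

variable {ν : Type*} (τ : ℤ) (RS : ν → ν → Set ν) (i j : ν)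

theorem nonneg_of_mem_DS {h : List (ν → ν → Bool)} {x : ν × ν × ℤ}
    (hx : x ∈ DS τ RS i j h) : 0 ≤ x.2.2 := by
  induction h generalizing x with
  | nil => exact hx.elim
  | cons s h ih =>
    rcases hx with ⟨hprev, -⟩ | ⟨hfresh, -⟩
    · linarith [ih hprev]
    · exact hfresh.ge

theorem mem_DS_allCoop_cons {h : List (ν → ν → Bool)} {x : ν × ν × ℤ} :
    x ∈ DS τ RS i j (allCoop :: h) ↔
      (x.1, x.2.1, x.2.2 - 1) ∈ DS τ RS i j h ∧ x.2.2 < τ := by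
  simp [DS, allCoop]

theorem mem_DS_of_mem_DS_replicate_allCoop_append {n : ℕ} {t : List (ν → ν → Bool)}
    {x : ν × ν × ℤ} (hx : x ∈ DS τ RS i j (List.replicate n allCoop ++ t)) :
    (x.1, x.2.1, x.2.2 - n) ∈ DS τ RS i j t := by
  induction n generalizing x with
  | zero => simpa using hx
  | succ n ih =>
    rw [List.replicate_succ, List.cons_append, mem_DS_allCoop_cons] at hx
    convert ih hx.1 using 3
    push_cast
    ring

/-- A defection surviving `n` cooperative stages is at least `n ≥ τ` stages old, while the most
recent cooperative stage keeps only ages below `τ`. -/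
theorem DS_replicate_allCoop_append_eq_empty {n : ℕ} (hn : 0 < n) (hτn : τ ≤ n)
    (t : List (ν → ν → Bool)) : DS τ RS i j (List.replicate n allCoop ++ t) = ∅ := by
  refine Set.eq_empty_of_forall_notMem fun x hx => ?_
  have hold := nonneg_of_mem_DS τ RS i j (mem_DS_of_mem_DS_replicate_allCoop_append τ RS i j hx)
  obtain ⟨m, rfl⟩ := Nat.exists_eq_add_of_lt hn
  rw [zero_add, List.replicate_succ, List.cons_append, mem_DS_allCoop_cons] at hx
  simp only at hold
  omega

end

/-- **Expiry after a one-shot deviation (Lemma corr-2).**  Let `s₀` be any public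
signal.  For `r > τ`, appending to a history `h` the signal `s₀` followed by `r − 1`
all-cooperate signals, or appending `r` all-cooperate signals, both yield an empty
defection set: `DS_i[j|h'_r] = DS_i[j|h*_r] = ∅`. -/
theorem DS_one_shot_deviation_expires
    {ν : Type*} (τ : ℕ) (hτ : 1 ≤ τ) (RS : ν → ν → Set ν)
    (s0 : ν → ν → Bool) (h : List (ν → ν → Bool)) (i j : ν)
    (r : ℕ) (hr : τ < r) :
    DS (τ : ℤ) RS i j (List.replicate (r - 1) allCoop ++ s0 :: h) = ∅ ∧
      DS (τ : ℤ) RS i j (List.replicate r allCoop ++ h) = ∅ :=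
  ⟨DS_replicate_allCoop_append_eq_empty _ RS i j (by omega) (by omega) _,
    DS_replicate_allCoop_append_eq_empty _ RS i j (by omega) (by omega) _⟩
end

section
/- Delayed discount-factor characterization (core of Lemma priv-suff): Let m ≥ 0 and τ ≥ 1 be integers and let a, u be real numbers with a > 0. There exists ω ∈ (0,1) such that u · ∑_{r=m+1}^{m+τ} ω^r ≥ a · ∑_{r=0}^{m} ω^r if and only if u·τ > a·(m+1). -/
/-!
At `ω = 1` the two sides are `a (m + 1)` and `u τ`, so a strict inequality there persists for
`ω` slightly below `1` by continuity. Conversely, for `ω ∈ (0, 1)` every term of the first sum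
is at least `ω ^ m > ω ^ (m + 1)` and every term of the second at most `ω ^ (m + 1)`, so the
inequality forces `a (m + 1) ω ^ (m + 1) < u τ ω ^ (m + 1)`.
-/

open Finset Filter Topology

theorem exists_mem_Ioo_pos_of_continuousAt {f : ℝ → ℝ} {a b : ℝ} (hab : a < b)
    (hf : ContinuousAt f b) (hfb : 0 < f b) : ∃ x ∈ Set.Ioo a b, 0 < f x := by
  have hpos : ∀ᶠ x in 𝓝[<] b, 0 < f x :=
    nhdsWithin_le_nhds (hf.eventually (lt_mem_nhds hfb))
  have hmem : ∀ᶠ x in 𝓝[<] b, x ∈ Set.Ioo a b := Ioo_mem_nhdsLT hab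
  exact (hmem.and hpos).exists

section Powers

variable {ω : ℝ}

theorem sum_Icc_pow_le_mul_pow (hω0 : 0 ≤ ω) (hω1 : ω ≤ 1) (k τ : ℕ) :
    ∑ r ∈ Icc (k + 1) (k + τ), ω ^ r ≤ τ * ω ^ (k + 1) := by
  calc ∑ r ∈ Icc (k + 1) (k + τ), ω ^ r ≤ #(Icc (k + 1) (k + τ)) • ω ^ (k + 1) :=
        sum_le_card_nsmul _ _ _ fun r hr => pow_le_pow_of_le_one hω0 hω1 (mem_Icc.mp hr).1
    _ = τ * ω ^ (k + 1) := by
        rw [Nat.card_Icc, nsmul_eq_mul, show k + τ + 1 - (k + 1) = τ by omega]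

theorem mul_pow_succ_lt_sum_Icc_zero_pow (hω0 : 0 < ω) (hω1 : ω < 1) (m : ℕ) :
    (m + 1) * ω ^ (m + 1) < ∑ r ∈ Icc 0 m, ω ^ r := by
  calc (m + 1) * ω ^ (m + 1) < (m + 1) * ω ^ m :=
        mul_lt_mul_of_pos_left (pow_lt_pow_right_of_lt_one₀ hω0 hω1 m.lt_succ_self) m.cast_add_one_pos
    _ = #(Icc 0 m) • ω ^ m := by
        rw [Nat.card_Icc, nsmul_eq_mul]
        push_cast
        ring
    _ ≤ ∑ r ∈ Icc 0 m, ω ^ r :=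
        card_nsmul_le_sum _ _ _ fun r hr => pow_le_pow_of_le_one hω0.le hω1.le (mem_Icc.mp hr).2

end Powers

theorem delayed_discount_factor_characterization_general
    (m τ : ℕ) (a u : ℝ) (ha : 0 < a) :
    (∃ ω ∈ Set.Ioo (0 : ℝ) 1,
        a * ∑ r ∈ Finset.Icc 0 m, ω ^ r ≤
          u * ∑ r ∈ Finset.Icc (m + 1) (m + τ), ω ^ r) ↔
      a * (m + 1) < u * τ := by
  constructor
  · rintro ⟨ω, ⟨hω0, hω1⟩, h⟩
    have hhead := mul_pow_succ_lt_sum_Icc_zero_pow hω0 hω1 m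
    have htail := sum_Icc_pow_le_mul_pow hω0.le hω1.le m τ
    have hpow : 0 < ω ^ (m + 1) := pow_pos hω0 _
    have hu : 0 < u := pos_of_mul_pos_left
      ((by positivity : 0 < a * ((m + 1) * ω ^ (m + 1))).trans_le
        ((mul_le_mul_of_nonneg_left hhead.le ha.le).trans h))
      (sum_nonneg fun r _ => by positivity)
    refine lt_of_mul_lt_mul_right ?_ hpow.le
    calc a * (m + 1) * ω ^ (m + 1) = a * ((m + 1) * ω ^ (m + 1)) := by ring
      _ < a * ∑ r ∈ Icc 0 m, ω ^ r := by gcongr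
      _ ≤ u * ∑ r ∈ Icc (m + 1) (m + τ), ω ^ r := h
      _ ≤ u * (τ * ω ^ (m + 1)) := by gcongr
      _ = u * τ * ω ^ (m + 1) := by ring
  · intro hlt
    obtain ⟨ω, hω, hpos⟩ := exists_mem_Ioo_pos_of_continuousAt
      (f := fun ω => u * ∑ r ∈ Icc (m + 1) (m + τ), ω ^ r - a * ∑ r ∈ Icc 0 m, ω ^ r)
      zero_lt_one (by fun_prop)
      (by simpa [Nat.card_Icc, show m + τ + 1 - (m + 1) = τ by omega] using hlt)
    exact ⟨ω, hω, (sub_pos.mp hpos).le⟩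

/-- **Delayed discount-factor characterization** (core of Lemma priv-suff).  For
integers `m ≥ 0` and `τ ≥ 1` and reals `a > 0` and `u`, there exists a discount
factor `ω ∈ (0,1)` with `u · ∑_{r=m+1}^{m+τ} ω^r ≥ a · ∑_{r=0}^{m} ω^r` if and only
if `u·τ > a·(m+1)`. -/
theorem delayed_discount_factor_characterization
    (m τ : ℕ) (hτ : 1 ≤ τ) (a u : ℝ) (ha : 0 < a) :
    (∃ ω ∈ Set.Ioo (0 : ℝ) 1,
        a * ∑ r ∈ Finset.Icc 0 m, ω ^ r ≤
          u * ∑ r ∈ Finset.Icc (m + 1) (m + τ), ω ^ r) ↔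
      a * (m + 1) < u * τ :=
  delayed_discount_factor_characterization_general m τ a u ha
end

section
/- Necessary benefit-to-cost ratio for direct reciprocity (quantitative content of Lemma nec-btc): Let τ ≥ 1 be an integer, γ > 0, β real, p ∈ (0,1], p̄ ≥ 0 with β > γ·p̄, q* ∈ [0,1), and q' ∈ [0,1]. If there exists ω ∈ (0,1) such that −(1−q*)·γ·p + ∑_{r=1}^{τ} ω^r · ((q'−q*)·(β−γ·p̄) − (1−q')·γ·p) ≥ 0, then q' > q* and β/γ > p̄ + (p/(q'−q*)) · (1−q' + (1−q*)/τ). -/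
/-!
Write `A = (q' - q*)(β - γ p̄) - (1 - q')γ p` for the per-stage loss while punished and
`S = ∑_{r=1}^{τ} ω^r`, so that the drop-condition reads `(1 - q*)γ p ≤ S · A`. The left side is
positive, hence so is `A`, which forces `q' > q*`. Since `0 ≤ S < τ` for `ω ∈ (0,1)`, we get
`(1 - q*)γ p < τ A`, and dividing by `γ τ (q' - q*)` is the claimed ratio bound.
-/

section OrderedField

variable {K : Type*} [Field K] [LinearOrder K] [IsStrictOrderedRing K]

theorem Finset.sum_Icc_pow_lt_of_lt_one {ω : K} (hω0 : 0 ≤ ω) (hω1 : ω < 1) {τ : ℕ}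
    (hτ : 1 ≤ τ) : ∑ r ∈ Finset.Icc 1 τ, ω ^ r < τ := by
  have hne : (Finset.Icc 1 τ).Nonempty := Finset.nonempty_Icc.2 hτ
  calc ∑ r ∈ Finset.Icc 1 τ, ω ^ r < ∑ _r ∈ Finset.Icc 1 τ, (1 : K) :=
        Finset.sum_lt_sum_of_nonempty hne fun r hr =>
          pow_lt_one₀ hω0 hω1 (Nat.one_le_iff_ne_zero.1 (Finset.mem_Icc.1 hr).1)
    _ = τ := by simp

theorem add_div_mul_add_div_lt_div {t d γ β pbar p c e : K} (ht : 0 < t) (hd : 0 < d)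
    (hγ : 0 < γ) (h : c * γ * p < t * (d * (β - γ * pbar) - e * γ * p)) :
    pbar + p / d * (e + c / t) < β / γ := by
  rw [lt_div_iff₀ hγ, ← sub_pos]
  have hgap : 0 < t * (d * (β - γ * pbar) - e * γ * p) - c * γ * p := sub_pos.2 h
  convert div_pos hgap (mul_pos ht hd) using 1
  field_simp
  ring

end OrderedField

theorem direct_reciprocity_necessary_ratio_general
    (τ : ℕ) (hτ : 1 ≤ τ) (γ β : ℝ) (hγ : 0 < γ)
    (p : ℝ) (hp0 : 0 < p)
    (pbar : ℝ) (hβ : γ * pbar < β)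
    (qstar : ℝ) (hq1 : qstar < 1)
    (q' : ℝ) (hq'1 : q' ≤ 1)
    (hdrop : ∃ ω ∈ Set.Ioo (0 : ℝ) 1,
      0 ≤ -(1 - qstar) * γ * p +
        ∑ r ∈ Finset.Icc 1 τ,
          ω ^ r * ((q' - qstar) * (β - γ * pbar) - (1 - q') * γ * p)) :
    qstar < q' ∧
      pbar + p / (q' - qstar) * (1 - q' + (1 - qstar) / τ) < β / γ := by
  obtain ⟨ω, ⟨hω0, hω1⟩, hdrop⟩ := hdrop
  rw [← Finset.sum_mul] at hdrop
  set S := ∑ r ∈ Finset.Icc 1 τ, ω ^ r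
  set A := (q' - qstar) * (β - γ * pbar) - (1 - q') * γ * p
  have hcost : 0 < (1 - qstar) * γ * p := mul_pos (mul_pos (sub_pos.2 hq1) hγ) hp0
  have hS : 0 ≤ S := Finset.sum_nonneg fun r _ => pow_nonneg hω0.le r
  have hA : 0 < A := pos_of_mul_pos_right (hcost.trans_le (by linarith)) hS
  have hq : qstar < q' := by
    have hpunish : 0 ≤ (1 - q') * γ * p :=
      mul_nonneg (mul_nonneg (sub_nonneg.2 hq'1) hγ.le) hp0.le
    exact sub_pos.1 (pos_of_mul_pos_left (by linarith) (sub_pos.2 hβ).le)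
  have hτA : (1 - qstar) * γ * p < τ * A :=
    calc (1 - qstar) * γ * p ≤ S * A := by linarith
      _ < τ * A :=
        mul_lt_mul_of_pos_right (Finset.sum_Icc_pow_lt_of_lt_one hω0.le hω1 hτ) hA
  exact ⟨hq, add_div_mul_add_div_lt_div (by exact_mod_cast hτ) (sub_pos.2 hq) hγ hτA⟩

/-- **Necessary benefit-to-cost ratio for direct reciprocity** (quantitative content
of Lemma nec-btc).  If the drop-condition for dropping a single neighbor holds for
some discount factor `ω ∈ (0,1)`, then `q' > q*` and
`β/γ > p̄ + (p/(q'−q*)) · (1−q' + (1−q*)/τ)`. -/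
theorem direct_reciprocity_necessary_ratio
    (τ : ℕ) (hτ : 1 ≤ τ) (γ β : ℝ) (hγ : 0 < γ)
    (p : ℝ) (hp0 : 0 < p) (hp1 : p ≤ 1)
    (pbar : ℝ) (hpbar : 0 ≤ pbar) (hβ : γ * pbar < β)
    (qstar : ℝ) (hq0 : 0 ≤ qstar) (hq1 : qstar < 1)
    (q' : ℝ) (hq'0 : 0 ≤ q') (hq'1 : q' ≤ 1)
    (hdrop : ∃ ω ∈ Set.Ioo (0 : ℝ) 1,
      0 ≤ -(1 - qstar) * γ * p +
        ∑ r ∈ Finset.Icc 1 τ,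
          ω ^ r * ((q' - qstar) * (β - γ * pbar) - (1 - q') * γ * p)) :
    qstar < q' ∧
      pbar + p / (q' - qstar) * (1 - q' + (1 - qstar) / τ) < β / γ :=
  direct_reciprocity_necessary_ratio_general τ hτ γ β hγ p hp0 pbar hβ qstar hq1 q' hq'1 hdrop
end

section
/- Sufficient benefit-to-cost ratio for full indirect reciprocity (quantitative core of Theorem indir-suff): Let τ ≥ 1 be an integer, γ > 0, β real, c ≥ 1, q_0, q_1 ∈ [0,1] with 1−q_0 ≤ c·(1−q_1), and p̄_0, p̄_1, P real with 0 ≤ p̄_0 ≤ P and 0 ≤ p̄_1 ≤ P. If β/γ > P·(1 + c/τ), then there exists ω ∈ (0,1) such that −(1−q_0)·γ·p̄_0 + (1−q_1)·(β − γ·p̄_1) · ∑_{r=1}^{τ} ω^r ≥ 0. -/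
/-!
The deviation costs at most `c (1 - q₁) γ P`, while the punishment makes it forfeit at least
`(1 - q₁) (β - γ P) ∑_{r=1}^{τ} ω^r`; after cancelling the common factor `1 - q₁ ≥ 0` it
suffices that `c γ P ≤ (β - γ P) ∑_{r=1}^{τ} ω^r`. The ratio hypothesis says that this holds
strictly at `ω = 1`, where the sum equals `τ`, so by continuity it holds for `ω` close to `1`.
-/

open Finset Filter Topology

lemma exists_lt_mul_sum_Icc_pow {a b : ℝ} {τ : ℕ} (h : a < b * τ) :
    ∃ ω ∈ Set.Ioo (0 : ℝ) 1, a < b * ∑ r ∈ Icc 1 τ, ω ^ r := by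
  have hlim : Tendsto (fun ω : ℝ ↦ b * ∑ r ∈ Icc 1 τ, ω ^ r) (𝓝[<] 1) (𝓝 (b * τ)) := by
    have hcont : Continuous (fun ω : ℝ ↦ b * ∑ r ∈ Icc 1 τ, ω ^ r) := by fun_prop
    simpa using hcont.tendsto 1 |>.mono_left nhdsWithin_le_nhds
  exact ((hlim.eventually_const_lt h).and (Ioo_mem_nhdsLT one_pos)).exists.imp
    fun _ h ↦ ⟨h.2, h.1⟩

lemma mul_lt_sub_mul_of_mul_one_add_div_lt {τ γ β c P : ℝ} (hτ : 0 < τ) (hγ : 0 < γ)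
    (h : P * (1 + c / τ) < β / γ) : c * (γ * P) < (β - γ * P) * τ := by
  rw [lt_div_iff₀ hγ] at h
  have hmul := mul_lt_mul_of_pos_right h hτ
  field_simp at hmul
  linarith

theorem full_indirect_reciprocity_sufficient_ratio_general
    (τ : ℕ) (hτ : 1 ≤ τ) (γ β : ℝ) (hγ : 0 < γ)
    (c : ℝ) (hc : 1 ≤ c)
    (q0 q1 : ℝ) (hq11 : q1 ≤ 1)
    (hcq : 1 - q0 ≤ c * (1 - q1))
    (p0 p1 P : ℝ) (hp00 : 0 ≤ p0) (hp0P : p0 ≤ P) (hp1P : p1 ≤ P)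
    (hratio : P * (1 + c / τ) < β / γ) :
    ∃ ω ∈ Set.Ioo (0 : ℝ) 1,
      0 ≤ -(1 - q0) * γ * p0 +
        (1 - q1) * (β - γ * p1) * ∑ r ∈ Finset.Icc 1 τ, ω ^ r := by
  have hτ' : (0 : ℝ) < τ := by exact_mod_cast hτ
  obtain ⟨ω, hω01, hω⟩ :=
    exists_lt_mul_sum_Icc_pow (mul_lt_sub_mul_of_mul_one_add_div_lt hτ' hγ hratio)
  refine ⟨ω, hω01, ?_⟩
  set S := ∑ r ∈ Icc 1 τ, ω ^ r
  have hS : 0 ≤ S := sum_nonneg fun r _ ↦ pow_nonneg hω01.1.le r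
  have hq1 : 0 ≤ 1 - q1 := by linarith
  have hcq1 : 0 ≤ c * (1 - q1) := mul_nonneg (by linarith) hq1
  suffices (1 - q0) * (γ * p0) ≤ (1 - q1) * (β - γ * p1) * S by linarith
  calc (1 - q0) * (γ * p0)
      ≤ c * (1 - q1) * (γ * P) := by gcongr
    _ = (1 - q1) * (c * (γ * P)) := by ring
    _ ≤ (1 - q1) * ((β - γ * P) * S) := by gcongr
    _ ≤ (1 - q1) * ((β - γ * p1) * S) := by gcongr
    _ = (1 - q1) * (β - γ * p1) * S := by ring

/-- **Sufficient benefit-to-cost ratio for full indirect reciprocity** (quantitative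
core of Theorem indir-suff).  If `β/γ > P·(1 + c/τ)`, then there is a discount
factor `ω ∈ (0,1)` for which the drop-condition
`−(1−q₀)·γ·p̄₀ + (1−q₁)·(β − γ·p̄₁) · ∑_{r=1}^{τ} ω^r ≥ 0` holds. -/
theorem full_indirect_reciprocity_sufficient_ratio
    (τ : ℕ) (hτ : 1 ≤ τ) (γ β : ℝ) (hγ : 0 < γ)
    (c : ℝ) (hc : 1 ≤ c)
    (q0 q1 : ℝ) (hq00 : 0 ≤ q0) (hq01 : q0 ≤ 1) (hq10 : 0 ≤ q1) (hq11 : q1 ≤ 1)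
    (hcq : 1 - q0 ≤ c * (1 - q1))
    (p0 p1 P : ℝ) (hp00 : 0 ≤ p0) (hp0P : p0 ≤ P) (hp10 : 0 ≤ p1) (hp1P : p1 ≤ P)
    (hratio : P * (1 + c / τ) < β / γ) :
    ∃ ω ∈ Set.Ioo (0 : ℝ) 1,
      0 ≤ -(1 - q0) * γ * p0 +
        (1 - q1) * (β - γ * p1) * ∑ r ∈ Finset.Icc 1 τ, ω ^ r :=
  full_indirect_reciprocity_sufficient_ratio_general τ hτ γ β hγ c hc q0 q1 hq11 hcq p0 p1 P hp00
    hp0P hp1P hratio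
end
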